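/- (Reduction lemma) Let X be a type with decidable equality, let α : X, and let L₁ and L₂ be lists over X that are permutations of each other (anagrams). Let N be a normal subgroup of FreeGroup X such that ⁅FreeGroup.of α, FreeGroup.of β⁆ ∈ N for every letter β occurring in L₁. If w(L₁)·w(L₂)⁻¹ ∈ N, then w(L̂₁)·w(L̂₂)⁻¹ ∈ N, where L̂ᵢ denotes the list Lᵢ with all occurrences of the letter α deleted (Lᵢ.filter (· ≠ α)). -/

import Mathlib

/-- The word in the free group spelled by a list of letters. -/
def wrd {X : Type*} (L : List X) : FreeGroup X := (L.map FreeGroup.of).prod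

open scoped commutatorElement

/-! Modulo `N`, the generator `α` commutes with every letter of the words, so each word is
its `α`-free part times `α ^ k`, with `k` the number of occurrences of `α`. Anagrams have the
same `k`, and cancelling `α ^ k` from `w(L₁) ≡ w(L₂)` leaves `w(L̂₁) ≡ w(L̂₂)`. -/

theorem List.prod_map_eq_prod_map_filter_ne_mul_pow_count {X M : Type*} [DecidableEq X]
    [Monoid M] (g : X → M) (α : X) (L : List X) (hcomm : ∀ β ∈ L, Commute (g α) (g β)) :
    (L.map g).prod = ((L.filter (· ≠ α)).map g).prod * g α ^ L.count α := by
  induction L with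
  | nil => simp
  | cons x L ih =>
    have hL : ∀ β ∈ L, Commute (g α) (g β) := fun β hβ => hcomm β (List.mem_cons_of_mem _ hβ)
    rw [List.map_cons, List.prod_cons, ih hL]
    by_cases hx : x = α
    · subst hx
      have hfilter : Commute (g x) ((L.filter (· ≠ x)).map g).prod :=
        Commute.list_prod_right _ _ fun y hy => by
          obtain ⟨b, hb, rfl⟩ := List.mem_map.mp hy
          exact hL b (List.mem_of_mem_filter hb)
      rw [List.filter_cons_of_neg (by simp), List.count_cons_self, ← mul_assoc, hfilter.eq,
        mul_assoc, pow_succ']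
    · rw [List.filter_cons_of_pos (by simpa using hx), List.count_cons_of_ne hx,
        List.map_cons, List.prod_cons, mul_assoc]

theorem MonoidHom.map_wrd {X G : Type*} [Monoid G] (f : FreeGroup X →* G) (L : List X) :
    f (wrd L) = (L.map (f ∘ FreeGroup.of)).prod := by
  rw [wrd, map_list_prod, List.map_map]

theorem QuotientGroup.commute_mk_of_commutatorElement_mem {G : Type*} [Group G]
    {N : Subgroup G} [N.Normal] {a b : G} (h : ⁅a, b⁆ ∈ N) : Commute (a : G ⧸ N) b := by
  rw [← commutatorElement_eq_one_iff_commute, ← QuotientGroup.mk'_apply, ← QuotientGroup.mk'_apply,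
    ← map_commutatorElement, QuotientGroup.mk'_apply, QuotientGroup.eq_one_iff]
  exact h

theorem stmt_6 {X : Type*} [DecidableEq X] (α : X) (L₁ L₂ : List X)
    (hperm : List.Perm L₁ L₂)
    (N : Subgroup (FreeGroup X)) [N.Normal]
    (hcomm : ∀ β ∈ L₁, ⁅FreeGroup.of α, FreeGroup.of β⁆ ∈ N)
    (hrel : wrd L₁ * (wrd L₂)⁻¹ ∈ N) :
    wrd (L₁.filter (· ≠ α)) * (wrd (L₂.filter (· ≠ α)))⁻¹ ∈ N := by
  set f := QuotientGroup.mk' N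
  have hcomm₁ : ∀ β ∈ L₁, Commute ((f ∘ FreeGroup.of) α) ((f ∘ FreeGroup.of) β) :=
    fun β hβ => QuotientGroup.commute_mk_of_commutatorElement_mem (hcomm β hβ)
  have hcomm₂ : ∀ β ∈ L₂, Commute ((f ∘ FreeGroup.of) α) ((f ∘ FreeGroup.of) β) :=
    fun β hβ => hcomm₁ β (hperm.mem_iff.mpr hβ)
  rw [← div_eq_mul_inv, ← QuotientGroup.eq_iff_div_mem] at hrel ⊢
  change f (wrd L₁) = f (wrd L₂) at hrel
  change f _ = f _
  rw [f.map_wrd, f.map_wrd, List.prod_map_eq_prod_map_filter_ne_mul_pow_count _ α _ hcomm₁,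
    List.prod_map_eq_prod_map_filter_ne_mul_pow_count _ α _ hcomm₂, hperm.count_eq] at hrel
  rw [f.map_wrd, f.map_wrd]
  exact mul_right_cancel hrel
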